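/- For any partition μ with at most n parts and any nonnegative integer r, e_r(x_1,...,x_n) · s_μ(x_1,...,x_n) = Σ_γ s_γ(x_1,...,x_n), where the sum is over all partitions γ ⊇ μ such that γ/μ is a vertical strip with r boxes (at most one box in each row). -/

import Mathlib

open scoped BigOperators

noncomputable section

/-- An integer partition: a weakly decreasing, eventually zero sequence of naturals. -/
structure IntPartition where
  part : ℕ → ℕ
  antitone : ∀ i j, i ≤ j → part j ≤ part i
  finite : ∃ N, ∀ i, N ≤ i → part i = 0

namespace IntPartition

instance : LE IntPartition := ⟨fun μ ν => ∀ i, μ.part i ≤ ν.part i⟩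

/-- The number of nonzero parts of a partition. -/
def len (μ : IntPartition) : ℕ :=
  Nat.find (p := fun N => μ.part N = 0)
    (by obtain ⟨N, hN⟩ := μ.finite; exact ⟨N, hN N le_rfl⟩)

/-- The size `|μ|` of a partition. -/
def size (μ : IntPartition) : ℕ := ∑ i ∈ Finset.range μ.len, μ.part i

/-- The number of boxes of the skew shape `ν/μ`. -/
def skewSize (ν μ : IntPartition) : ℕ := ν.size - μ.size

/-- One less than the number of nonempty rows of `ν/μ`. -/
def height (μ ν : IntPartition) : ℕ :=
  (((Finset.range ν.len).filter (fun i => μ.part i < ν.part i)).card) - 1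

/-- The set of boxes of the skew diagram `ν/μ` (rows and columns indexed from 0). -/
def cells (μ ν : IntPartition) : Set (ℕ × ℕ) :=
  {c | μ.part c.1 ≤ c.2 ∧ c.2 < ν.part c.1}

/-- Two boxes are adjacent if they share a common side. -/
def Adj (a b : ℕ × ℕ) : Prop :=
  (a.1 = b.1 ∧ (a.2 + 1 = b.2 ∨ b.2 + 1 = a.2)) ∨
  (a.2 = b.2 ∧ (a.1 + 1 = b.1 ∨ b.1 + 1 = a.1))

/-- A set of boxes is connected if any two of its boxes are joined by a path of
adjacent boxes within the set. -/
def ConnectedIn (S : Set (ℕ × ℕ)) : Prop :=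
  ∀ a ∈ S, ∀ b ∈ S,
    Relation.ReflTransGen (fun u v => u ∈ S ∧ v ∈ S ∧ Adj u v) a b

/-- `ν/μ` is a border strip with `r` boxes: connected and with no 2×2 block. -/
def IsBorderStrip (μ ν : IntPartition) (r : ℕ) : Prop :=
  μ ≤ ν ∧ skewSize ν μ = r ∧ ConnectedIn (cells μ ν) ∧
    ∀ i j : ℕ, ¬ ((i, j) ∈ cells μ ν ∧ (i + 1, j) ∈ cells μ ν ∧
      (i, j + 1) ∈ cells μ ν ∧ (i + 1, j + 1) ∈ cells μ ν)

/-- `ν/μ` is a vertical strip with `r` boxes (at most one box per row). -/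
def IsVerticalStrip (μ ν : IntPartition) (r : ℕ) : Prop :=
  μ ≤ ν ∧ skewSize ν μ = r ∧ ∀ i, ν.part i ≤ μ.part i + 1

/-- `ν/μ` is a horizontal strip with `r` boxes (at most one box per column). -/
def IsHorizontalStrip (μ ν : IntPartition) (r : ℕ) : Prop :=
  μ ≤ ν ∧ skewSize ν μ = r ∧ ∀ i, ν.part (i + 1) ≤ μ.part i

/-- The conjugate partition. -/
def conj (μ : IntPartition) : IntPartition where
  part j := ((Finset.range μ.len).filter (fun i => j < μ.part i)).card
  antitone := by
    intro i j hij
    apply Finset.card_le_card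
    intro a ha
    simp only [Finset.mem_filter] at ha ⊢
    exact ⟨ha.1, lt_of_le_of_lt hij ha.2⟩
  finite := ⟨μ.part 0, by
    intro j hj
    simp only [Finset.card_eq_zero, Finset.filter_eq_empty_iff]
    intro a _
    have := μ.antitone 0 a (Nat.zero_le a)
    omega⟩

end IntPartition
/-- The field of rational functions in `n` variables over `ℚ`. -/
abbrev K (n : ℕ) := FractionRing (MvPolynomial (Fin n) ℚ)

/-- The variables `x_i`. -/
def X {n : ℕ} (i : Fin n) : K n :=
  algebraMap (MvPolynomial (Fin n) ℚ) (K n) (MvPolynomial.X i)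

/-- The power sum polynomial `p_r(x_1,…,x_n)`. -/
def psum (n r : ℕ) : K n := ∑ i : Fin n, X i ^ r

/-- The elementary symmetric polynomial `e_r(x_1,…,x_n)`. -/
def esymm (n r : ℕ) : K n :=
  ∑ s ∈ Finset.powersetCard r (Finset.univ : Finset (Fin n)), ∏ i ∈ s, X i

/-- The complete homogeneous symmetric polynomial `h_r(x_1,…,x_n)`. -/
def hsymm (n r : ℕ) : K n :=
  ∑ c : Sym (Fin n) r, (c.1.map (fun i => X i)).prod

/-- The Schur polynomial `s_μ(x_1,…,x_n)`, via the bialternant formula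
(zero when `μ` has more than `n` parts). -/
def schur (n : ℕ) (μ : IntPartition) : K n :=
  if μ.len ≤ n then
    (Matrix.det (Matrix.of fun i j : Fin n => X i ^ (μ.part j + (n - 1 - (j : ℕ))))) /
      (Matrix.det (Matrix.of fun i j : Fin n => X i ^ (n - 1 - (j : ℕ))))
  else 0

open Finset

/-!
Write `s_μ = a_{μ+δ} / a_δ` with the alternants `a_β = det (x_i ^ β_j)` and `δ = (n-1, …, 0)`.
Since `e_r` is symmetric, expanding the determinant gives `e_r a_{μ+δ} = Σ_{|T| = r} a_{μ+δ+1_T}`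
over the `r`-sets `T` of rows. If `μ + 1_T` is not weakly decreasing then some row `i + 1 ∈ T`,
`i ∉ T` has `μ_i = μ_{i+1}`, so columns `i` and `i + 1` of `a_{μ+δ+1_T}` agree and the term
vanishes. The remaining `T` are exactly the sets of rows grown by the vertical strips `γ/μ` with
`r` boxes and at most `n` rows, and strips reaching row `n + 1` contribute `s_γ = 0`.
-/

theorem Finset.sum_powersetCard_univ_map_equiv {α M : Type*} [Fintype α] [AddCommMonoid M]
    (σ : Equiv.Perm α) (r : ℕ) (f : Finset α → M) :
    ∑ S ∈ powersetCard r univ, f S = ∑ T ∈ powersetCard r univ, f (T.map σ.toEmbedding) := by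
  conv_lhs => rw [← map_univ_equiv σ, powersetCard_map, sum_map]
  rfl

theorem Finset.prod_mul_prod_pow {α M : Type*} [Fintype α] [CommMonoid M] [DecidableEq α]
    (T : Finset α) (y : α → M) (β : α → ℕ) :
    (∏ j ∈ T, y j) * ∏ j, y j ^ β j = ∏ j, y j ^ (β j + if j ∈ T then 1 else 0) := by
  simp only [pow_add, prod_mul_distrib, pow_ite, pow_one, pow_zero, prod_ite_mem,
    univ_inter, mul_comm]

section Alternant

variable {n : ℕ}

def alternant (n : ℕ) (β : Fin n → ℕ) : K n :=
  Matrix.det (Matrix.of fun i j : Fin n => X i ^ β j)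

def staircase (n : ℕ) (j : Fin n) : ℕ := n - 1 - j

theorem alternant_eq_zero_of_not_injective {β : Fin n → ℕ} (h : ¬ Function.Injective β) :
    alternant n β = 0 := by
  obtain ⟨i, j, hij, hne⟩ : ∃ i j, β i = β j ∧ i ≠ j := by
    simpa [Function.Injective] using h
  exact Matrix.det_zero_of_column_eq hne fun k => by simp [hij]

theorem schur_eq_alternant_div {μ : IntPartition} (h : μ.len ≤ n) :
    schur n μ =
      alternant n (fun j => μ.part j + staircase n j) / alternant n (staircase n) := by
  rw [schur, if_pos h]
  rfl

theorem esymm_mul_alternant (r : ℕ) (β : Fin n → ℕ) :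
    esymm n r * alternant n β =
      ∑ T ∈ powersetCard r univ, alternant n (fun j => β j + if j ∈ T then 1 else 0) := by
  calc esymm n r * alternant n β
      = ∑ σ : Equiv.Perm (Fin n), Equiv.Perm.sign σ •
          ∑ S ∈ powersetCard r univ, (∏ i ∈ S, X i) * ∏ j, X (σ j) ^ β j := by
        simp only [esymm, alternant, Matrix.det_apply, Matrix.of_apply, sum_mul, mul_sum,
          smul_sum, mul_smul_comm]
    _ = ∑ σ : Equiv.Perm (Fin n), Equiv.Perm.sign σ •
          ∑ T ∈ powersetCard r univ, ∏ j, X (σ j) ^ (β j + if j ∈ T then 1 else 0) := by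
        refine sum_congr rfl fun σ _ => congrArg _ ?_
        rw [sum_powersetCard_univ_map_equiv σ]
        refine sum_congr rfl fun T _ => ?_
        rw [prod_map]
        exact prod_mul_prod_pow T (fun j => X (σ j)) β
    _ = _ := by
        simp only [alternant, Matrix.det_apply, Matrix.of_apply, smul_sum]
        exact sum_comm

theorem len_le_of_schur_ne_zero {μ : IntPartition} (h : schur n μ ≠ 0) : μ.len ≤ n := by
  by_contra hlen
  exact h (if_neg hlen)

end Alternant

namespace IntPartition

variable {μ ν γ : IntPartition} {n r : ℕ}

theorem ext_part (h : μ.part = ν.part) : μ = ν := by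
  cases μ; cases ν; cases h; rfl

theorem part_len (μ : IntPartition) : μ.part μ.len = 0 :=
  Nat.find_spec (p := fun N => μ.part N = 0) _

theorem part_eq_zero_of_len_le {i : ℕ} (h : μ.len ≤ i) : μ.part i = 0 :=
  Nat.eq_zero_of_le_zero (μ.part_len ▸ μ.antitone _ _ h)

theorem len_le_of_part_eq_zero {i : ℕ} (h : μ.part i = 0) : μ.len ≤ i :=
  Nat.find_min' _ h

theorem size_eq_sum_fin (h : μ.len ≤ n) : μ.size = ∑ j : Fin n, μ.part j := by
  rw [Fin.sum_univ_eq_sum_range (fun i => μ.part i)]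
  exact sum_subset (range_subset_range.2 h) fun i _ hi =>
    part_eq_zero_of_len_le (by simpa using hi)

theorem eq_of_part_fin (hμ : μ.len ≤ n) (hν : ν.len ≤ n)
    (h : ∀ j : Fin n, μ.part j = ν.part j) : μ = ν := by
  refine ext_part <| funext fun i => ?_
  by_cases hi : i < n
  · exact h ⟨i, hi⟩
  · rw [part_eq_zero_of_len_le (hμ.trans (not_lt.1 hi)),
      part_eq_zero_of_len_le (hν.trans (not_lt.1 hi))]

def ofFin (v : Fin n → ℕ) (hv : Antitone v) : IntPartition where
  part i := if h : i < n then v ⟨i, h⟩ else 0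
  antitone i j hij := by
    by_cases hj : j < n
    · rw [dif_pos hj, dif_pos (hij.trans_lt hj)]
      exact hv (Fin.mk_le_mk.2 hij)
    · rw [dif_neg hj]
      exact Nat.zero_le _
  finite := ⟨n, fun _ hi => dif_neg (not_lt.2 hi)⟩

section ofFin

variable {v : Fin n → ℕ} {hv : Antitone v}

@[simp]
theorem ofFin_part_val (j : Fin n) : (ofFin v hv).part j = v j :=
  dif_pos j.isLt

theorem len_ofFin_le : (ofFin v hv).len ≤ n :=
  len_le_of_part_eq_zero (dif_neg (lt_irrefl n))

theorem size_ofFin : (ofFin v hv).size = ∑ j, v j := by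
  rw [size_eq_sum_fin len_ofFin_le]
  exact sum_congr rfl fun j _ => ofFin_part_val j

end ofFin

theorem IsVerticalStrip.part_eq (hs : IsVerticalStrip μ γ r) (i : ℕ) :
    γ.part i = μ.part i + if μ.part i < γ.part i then 1 else 0 := by
  have := hs.1 i
  have := hs.2.2 i
  split_ifs <;> omega

def addRows (μ : IntPartition) (T : Finset (Fin n)) (j : Fin n) : ℕ :=
  μ.part j + if j ∈ T then 1 else 0

def grownRows (n : ℕ) (μ γ : IntPartition) : Finset (Fin n) :=
  {j | μ.part j < γ.part j}

theorem sum_addRows (μ : IntPartition) (T : Finset (Fin n)) :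
    ∑ j, μ.addRows T j = ∑ j : Fin n, μ.part j + T.card := by
  simp [addRows, sum_add_distrib]

theorem IsVerticalStrip.part_eq_addRows (hs : IsVerticalStrip μ γ r) (j : Fin n) :
    γ.part j = μ.addRows (grownRows n μ γ) j := by
  conv_lhs => rw [hs.part_eq j]
  simp [addRows, grownRows]

theorem IsVerticalStrip.antitone_addRows (hs : IsVerticalStrip μ γ r) :
    Antitone (μ.addRows (grownRows n μ γ)) := fun i j hij => by
  rw [← hs.part_eq_addRows, ← hs.part_eq_addRows]
  exact γ.antitone _ _ hij

theorem IsVerticalStrip.card_grownRows (hs : IsVerticalStrip μ γ r) (hμ : μ.len ≤ n)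
    (hγ : γ.len ≤ n) : (grownRows n μ γ).card = r := by
  have hsize : γ.size = μ.size + (grownRows n μ γ).card := by
    rw [size_eq_sum_fin hγ, size_eq_sum_fin hμ, ← sum_addRows]
    exact sum_congr rfl fun j _ => hs.part_eq_addRows j
  have := hs.2.1
  unfold skewSize at this
  omega

theorem isVerticalStrip_ofFin_addRows (hμ : μ.len ≤ n) {T : Finset (Fin n)}
    (hT : Antitone (μ.addRows T)) : IsVerticalStrip μ (ofFin _ hT) T.card := by
  have hrow : ∀ i, μ.part i ≤ (ofFin _ hT).part i ∧ (ofFin _ hT).part i ≤ μ.part i + 1 := by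
    intro i
    by_cases hi : i < n
    · have := ofFin_part_val (hv := hT) ⟨i, hi⟩
      simp only [addRows] at this
      split_ifs at this <;> omega
    · simp [ofFin, hi, part_eq_zero_of_len_le (hμ.trans (not_lt.1 hi))]
  refine ⟨fun i => (hrow i).1, ?_, fun i => (hrow i).2⟩
  rw [skewSize, size_ofFin, sum_addRows, size_eq_sum_fin hμ]
  omega

theorem grownRows_ofFin_addRows {T : Finset (Fin n)} (hT : Antitone (μ.addRows T)) :
    grownRows n μ (ofFin _ hT) = T := by
  ext j
  by_cases hj : j ∈ T <;> simp [grownRows, addRows, hj]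

theorem bijOn_grownRows (hμ : μ.len ≤ n) :
    Set.BijOn (grownRows n μ) {γ | IsVerticalStrip μ γ r ∧ γ.len ≤ n}
      {T | T.card = r ∧ Antitone (μ.addRows T)} := by
  refine ⟨fun γ ⟨hs, hγ⟩ => ⟨hs.card_grownRows hμ hγ, hs.antitone_addRows⟩, ?_, ?_⟩
  · rintro γ ⟨hs, hγ⟩ γ' ⟨hs', hγ'⟩ h
    refine eq_of_part_fin hγ hγ' fun j => ?_
    rw [hs.part_eq_addRows, hs'.part_eq_addRows, h]
  · rintro T ⟨rfl, hT⟩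
    exact ⟨ofFin _ hT, ⟨isVerticalStrip_ofFin_addRows hμ hT, len_ofFin_le⟩,
      grownRows_ofFin_addRows hT⟩

theorem not_injective_addRows_add_staircase {T : Finset (Fin n)} (h : ¬ Antitone (μ.addRows T)) :
    ¬ Function.Injective fun j => μ.addRows T j + staircase n j := by
  cases n with
  | zero => exact absurd (fun i => i.elim0) h
  | succ m =>
    obtain ⟨i, hi⟩ : ∃ i : Fin m, μ.addRows T i.castSucc < μ.addRows T i.succ := by
      simpa [Fin.antitone_iff_succ_le] using h
    intro hinj
    refine (Fin.castSucc_lt_succ (i := i)).ne (hinj ?_)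
    have := μ.antitone i (i + 1) (Nat.le_succ _)
    simp only [addRows, staircase, Fin.val_castSucc, Fin.val_succ] at hi ⊢
    split_ifs at hi ⊢ <;> omega

end IntPartition

theorem esymm_mul_schur {n : ℕ} (r : ℕ) {μ : IntPartition} (hμ : μ.len ≤ n) :
    esymm n r * schur n μ = ∑ T ∈ powersetCard r univ with Antitone (μ.addRows T),
      alternant n (fun j => μ.addRows T j + staircase n j) / alternant n (staircase n) := by
  have hexp : ∀ T : Finset (Fin n),
      (fun j : Fin n => μ.part j + staircase n j + if j ∈ T then 1 else 0) =
        fun j => μ.addRows T j + staircase n j :=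
    fun T => funext fun j => add_right_comm _ _ _
  rw [schur_eq_alternant_div hμ, ← mul_div_assoc, esymm_mul_alternant, sum_div, sum_filter_of_ne]
  · simp only [hexp]
  · refine fun T _ hne => by_contra fun hbad => hne ?_
    rw [alternant_eq_zero_of_not_injective
      (IntPartition.not_injective_addRows_add_staircase hbad), zero_div]

theorem finsum_schur_isVerticalStrip {n : ℕ} (r : ℕ) {μ : IntPartition} (hμ : μ.len ≤ n) :
    ∑ᶠ γ ∈ {γ | IntPartition.IsVerticalStrip μ γ r}, schur n γ =
      ∑ᶠ T ∈ {T : Finset (Fin n) | T.card = r ∧ Antitone (μ.addRows T)},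
        alternant n (fun j => μ.addRows T j + staircase n j) / alternant n (staircase n) := by
  rw [finsum_mem_inter_support_eq' (schur n) {γ | IntPartition.IsVerticalStrip μ γ r}
    {γ | IntPartition.IsVerticalStrip μ γ r ∧ γ.len ≤ n}
    fun γ hγ => (and_iff_left (len_le_of_schur_ne_zero hγ)).symm]
  refine finsum_mem_eq_of_bijOn _ (IntPartition.bijOn_grownRows hμ) fun γ ⟨hs, hγ⟩ => ?_
  simp only [schur_eq_alternant_div hγ, hs.part_eq_addRows]

/-- Pieri's rule (elementary version): `e_r · s_μ = Σ_{γ/μ ∈ VS(r)} s_γ`. -/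
theorem pieri_esymm (n r : ℕ) (μ : IntPartition) (hμ : μ.len ≤ n) :
    esymm n r * schur n μ =
      ∑ᶠ γ ∈ {γ | IntPartition.IsVerticalStrip μ γ r}, schur n γ := by
  rw [esymm_mul_schur r hμ, finsum_schur_isVerticalStrip r hμ, ← finsum_mem_coe_finset]
  congr
  ext T
  simp
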